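/- Let G be a finite multigraph with p cut-edges, and let S, T be disjoint subsets of V(G), with R = V(G) − S − T. Let q(S,T) be the number of components Q of G−S−T with ‖V(Q),T‖ odd. Then 3·q(S,T) ≤ 2p + 2‖R,S‖ + d_{G−S}(T). -/

import Mathlib

open scoped Classical
noncomputable section

structure Multigraph (V : Type) (E : Type) where
  inc : E → Sym2 V

namespace Multigraph

variable {V E : Type}

/-- The number of times vertex `v` occurs as an endpoint of the unordered pair `s`
(a loop at `v` counts twice). -/
def endCount (v : V) (s : Sym2 V) : ℕ :=
  Sym2.lift ⟨fun a b => (if a = v then 1 else 0) + (if b = v then 1 else 0),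
    fun _ _ => add_comm _ _⟩ s

/-- The degree of a vertex in a multigraph (a loop contributes 2). -/
def degree [Fintype E] (G : Multigraph V E) (v : V) : ℕ :=
  ∑ e : E, endCount v (G.inc e)

/-- `G` has a spanning `ℓ`-regular subgraph (a set of edges giving each vertex degree `ℓ`). -/
def HasFactor [Fintype E] (G : Multigraph V E) (ℓ : ℕ) : Prop :=
  ∃ F : Finset E, ∀ v : V, ∑ e ∈ F, endCount v (G.inc e) = ℓ

/-- One step along an edge not in `A`. -/
def Step (G : Multigraph V E) (A : Set E) (x y : V) : Prop :=
  ∃ e : E, e ∉ A ∧ G.inc e = s(x, y)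

/-- The number of connected components of `G` after deleting the edges in `A`. -/
def numComponents (G : Multigraph V E) (A : Set E) : ℕ :=
  Nat.card (Quot (G.Step A))

/-- An edge is a cut-edge if deleting it increases the number of components. -/
def IsCutEdge (G : Multigraph V E) (e : E) : Prop :=
  G.numComponents ∅ < G.numComponents {e}

/-- The number of cut-edges of `G`. -/
def cutEdgeCount (G : Multigraph V E) : ℕ :=
  Nat.card {e : E // G.IsCutEdge e}

/-- `‖A,B‖`: the number of edges with one endpoint in `A` and the other in `B`
(for disjoint `A` and `B`). -/
def edgesBetween (G : Multigraph V E) (A B : Set V) : ℕ :=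
  Nat.card {e : E // ∃ a ∈ A, ∃ b ∈ B, G.inc e = s(a, b)}

/-- The degree of `v` in `G − S` (only edges with no endpoint in `S` count). -/
def degreeAvoid [Fintype E] (G : Multigraph V E) (S : Set V) (v : V) : ℕ :=
  ∑ e : E, if ∀ u ∈ S, ¬ u ∈ G.inc e then endCount v (G.inc e) else 0

/-- `d_{G−S}(T)`: the sum over `v ∈ T` of the degree of `v` in `G − S`. -/
def degSumAvoid [Fintype V] [Fintype E] (G : Multigraph V E) (S T : Set V) : ℕ :=
  ∑ v : V, if v ∈ T then G.degreeAvoid S v else 0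

/-- One step inside the vertex set `R`. -/
def StepIn (G : Multigraph V E) (R : Set V) (x y : V) : Prop :=
  x ∈ R ∧ y ∈ R ∧ ∃ e : E, G.inc e = s(x, y)

/-- Reachability within the vertex set `R`. -/
def ReachIn (G : Multigraph V E) (R : Set V) : V → V → Prop :=
  Relation.ReflTransGen (G.StepIn R)

/-- The component of `v` in the submultigraph induced by `R`. -/
def componentIn (G : Multigraph V E) (R : Set V) (v : V) : Set V :=
  {w | G.ReachIn R v w}

/-- `C` is (the vertex set of) a component of the submultigraph induced by `R`. -/
def IsCompOf (G : Multigraph V E) (R : Set V) (C : Set V) : Prop :=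
  ∃ v ∈ R, C = G.componentIn R v

/-- `q(S,T)`: the number of components `Q` of `G − S − T` with `‖V(Q),T‖` odd. -/
def oddComps (G : Multigraph V E) (S T : Set V) : ℕ :=
  Nat.card {C : Set V // G.IsCompOf ((S ∪ T)ᶜ) C ∧ Odd (G.edgesBetween C T)}

end Multigraph

/-!
Let `R = V(G) − S − T`. An odd component `C` of `G − S − T` has `‖C,T‖ ≥ 1`, so either
`‖C,S‖ ≥ 1`, or `‖C,T‖ ≥ 3`, or a single edge `e` leaves `C`; in the last case `C` is closed
in `G − e` while `e` joins `C` to a vertex outside it, so `e` is a cut-edge.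
Hence `3 ≤ 2·[C has one leaving edge] + 2‖C,S‖ + ‖C,T‖` for each odd component. Edges leaving
distinct components of `G[R]` towards `V(G) − R` are distinct, so summing over the odd
components bounds the three terms by `2p`, `2‖R,S‖` and `‖R,T‖ ≤ d_{G−S}(T)`.
-/

theorem Relation.EqvGen.mem_iff_of_closed {α : Type*} {r : α → α → Prop} [Std.Symm r]
    {C : Set α} (hC : ∀ x y, x ∈ C → r x y → y ∈ C) {x y : α}
    (h : Relation.EqvGen r x y) : x ∈ C ↔ y ∈ C := by
  induction h with
  | rel a b h => exact ⟨fun ha => hC a b ha h, fun hb => hC b a hb (Std.Symm.symm a b h)⟩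
  | refl => rfl
  | symm _ _ _ ih => exact ih.symm
  | trans _ _ _ _ _ ih ih' => exact ih.trans ih'

theorem three_le_two_mul_ite_add_of_odd {s t : ℕ} (ht : Odd t) :
    3 ≤ 2 * (if s + t = 1 then 1 else 0) + 2 * s + t := by
  obtain ⟨k, rfl⟩ := ht
  split_ifs <;> omega

namespace Multigraph

variable {V E : Type} (G : Multigraph V E)

instance (R : Set V) : Std.Symm (G.StepIn R) where
  symm _ _ := fun ⟨hx, hy, e, he⟩ => ⟨hy, hx, e, he.trans Sym2.eq_swap⟩

instance (A : Set E) : Std.Symm (G.Step A) where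
  symm _ _ := fun ⟨e, hA, he⟩ => ⟨e, hA, he.trans Sym2.eq_swap⟩

theorem reachIn_symm {R : Set V} {x y : V} (h : G.ReachIn R x y) : G.ReachIn R y x :=
  Relation.ReflTransGen.stdSymm.symm x y h

theorem componentIn_eq_of_mem {R : Set V} {v a : V} (ha : a ∈ G.componentIn R v) :
    G.componentIn R v = G.componentIn R a := by
  ext x
  exact ⟨(G.reachIn_symm ha).trans, ha.trans⟩

variable {G}

namespace IsCompOf

variable {R C C' : Set V}

theorem eq_componentIn (hC : G.IsCompOf R C) {a : V} (ha : a ∈ C) : C = G.componentIn R a := by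
  obtain ⟨v, -, rfl⟩ := hC
  exact G.componentIn_eq_of_mem ha

theorem eq_of_mem (hC : G.IsCompOf R C) (hC' : G.IsCompOf R C') {a : V} (ha : a ∈ C)
    (ha' : a ∈ C') : C = C' := by
  rw [hC.eq_componentIn ha, hC'.eq_componentIn ha']

theorem subset (hC : G.IsCompOf R C) : C ⊆ R := by
  obtain ⟨v, hv, rfl⟩ := hC
  intro w hw
  induction hw with
  | refl => exact hv
  | tail _ h _ => exact h.2.1

theorem mem_of_stepIn (hC : G.IsCompOf R C) {x y : V} (hx : x ∈ C) (h : G.StepIn R x y) :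
    y ∈ C := by
  rw [hC.eq_componentIn hx]
  exact Relation.ReflTransGen.single h

end IsCompOf

section EdgeFinset

variable [Fintype E] (G)

def edgeFinsetBetween (A B : Set V) : Finset E :=
  Finset.univ.filter fun e => ∃ a ∈ A, ∃ b ∈ B, G.inc e = s(a, b)

variable {G}

@[simp]
theorem mem_edgeFinsetBetween {A B : Set V} {e : E} :
    e ∈ G.edgeFinsetBetween A B ↔ ∃ a ∈ A, ∃ b ∈ B, G.inc e = s(a, b) := by
  simp [edgeFinsetBetween]

theorem card_edgeFinsetBetween (A B : Set V) :
    (G.edgeFinsetBetween A B).card = G.edgesBetween A B := by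
  rw [edgesBetween, Nat.card_eq_fintype_card, Fintype.card_subtype, edgeFinsetBetween]

theorem edgesBetween_union_right {A B B' : Set V} (hAB : Disjoint A B) (hBB' : Disjoint B B') :
    G.edgesBetween A (B ∪ B') = G.edgesBetween A B + G.edgesBetween A B' := by
  have hdisj : Disjoint (G.edgeFinsetBetween A B) (G.edgeFinsetBetween A B') := by
    refine Finset.disjoint_left.2 fun e he he' => ?_
    obtain ⟨a, ha, b, hb, hab⟩ := mem_edgeFinsetBetween.1 he
    obtain ⟨a', ha', b', hb', hab'⟩ := mem_edgeFinsetBetween.1 he'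
    rcases Sym2.eq_iff.1 (hab.symm.trans hab') with ⟨-, rfl⟩ | ⟨-, rfl⟩
    · exact hBB'.notMem_of_mem_left hb hb'
    · exact hAB.notMem_of_mem_left ha' hb
  have hunion : G.edgeFinsetBetween A (B ∪ B') =
      G.edgeFinsetBetween A B ∪ G.edgeFinsetBetween A B' := by
    ext e
    simp only [mem_edgeFinsetBetween, Finset.mem_union, Set.mem_union]
    grind
  rw [← card_edgeFinsetBetween, hunion, Finset.card_union_of_disjoint hdisj,
    card_edgeFinsetBetween, card_edgeFinsetBetween]

theorem IsCompOf.disjoint_edgeFinsetBetween {R C C' W : Set V} (hC : G.IsCompOf R C)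
    (hC' : G.IsCompOf R C') (hCC' : C ≠ C') (hRW : Disjoint R W) :
    Disjoint (G.edgeFinsetBetween C W) (G.edgeFinsetBetween C' W) := by
  refine Finset.disjoint_left.2 fun e he he' => ?_
  obtain ⟨a, ha, b, hb, hab⟩ := mem_edgeFinsetBetween.1 he
  obtain ⟨a', ha', b', hb', hab'⟩ := mem_edgeFinsetBetween.1 he'
  rcases Sym2.eq_iff.1 (hab.symm.trans hab') with ⟨rfl, -⟩ | ⟨rfl, -⟩
  · exact hCC' (hC.eq_of_mem hC' ha ha')
  · exact hRW.notMem_of_mem_left (hC.subset ha) hb'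

variable {R W : Set V} {𝒞 : Finset (Set V)}

theorem sum_edgesBetween_eq_card_biUnion (h𝒞 : ∀ C ∈ 𝒞, G.IsCompOf R C)
    (hRW : Disjoint R W) :
    ∑ C ∈ 𝒞, G.edgesBetween C W = (𝒞.biUnion fun C => G.edgeFinsetBetween C W).card := by
  rw [Finset.card_biUnion fun C hC C' hC' hCC' =>
    (h𝒞 C hC).disjoint_edgeFinsetBetween (h𝒞 C' hC') hCC' hRW]
  simp only [card_edgeFinsetBetween]

theorem sum_edgesBetween_le (h𝒞 : ∀ C ∈ 𝒞, G.IsCompOf R C) (hRW : Disjoint R W) :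
    ∑ C ∈ 𝒞, G.edgesBetween C W ≤ G.edgesBetween R W := by
  rw [sum_edgesBetween_eq_card_biUnion h𝒞 hRW, ← card_edgeFinsetBetween]
  refine Finset.card_le_card fun e he => ?_
  obtain ⟨C, hC, he⟩ := Finset.mem_biUnion.1 he
  obtain ⟨a, ha, b, hb, hab⟩ := mem_edgeFinsetBetween.1 he
  exact mem_edgeFinsetBetween.2 ⟨a, (h𝒞 C hC).subset ha, b, hb, hab⟩

theorem edgesBetween_le_degSumAvoid [Fintype V] {R S T : Set V} (hRS : Disjoint R S)
    (hST : Disjoint S T) : G.edgesBetween R T ≤ G.degSumAvoid S T := by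
  set f : E → V → ℕ := fun e v =>
    if v ∈ T then (if ∀ u ∈ S, u ∉ G.inc e then endCount v (G.inc e) else 0) else 0
  have hswap : G.degSumAvoid S T = ∑ e, ∑ v, f e v := by
    rw [Finset.sum_comm]
    refine Finset.sum_congr rfl fun v _ => ?_
    by_cases hv : v ∈ T
    · simp only [f, hv, if_true, degreeAvoid]
      -- the two sides differ only in their `Decidable` instances
      exact Finset.sum_congr rfl fun _ _ => by congr
    · simp only [f, hv, if_false, Finset.sum_const_zero]
  have hone : ∀ e ∈ G.edgeFinsetBetween R T, 1 ≤ ∑ v, f e v := by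
    intro e he
    obtain ⟨a, ha, b, hb, hab⟩ := mem_edgeFinsetBetween.1 he
    have havoid : ∀ u ∈ S, u ∉ G.inc e := by
      rintro u hu hue
      rcases Sym2.mem_iff.1 (hab ▸ hue) with rfl | rfl
      · exact hRS.notMem_of_mem_right hu ha
      · exact hST.notMem_of_mem_left hu hb
    calc 1 ≤ f e b := by
          simp only [f]
          rw [if_pos hb, if_pos havoid, hab]
          simp [endCount]
      _ ≤ ∑ v, f e v := Finset.single_le_sum (fun _ _ => Nat.zero_le _) (Finset.mem_univ b)
  calc G.edgesBetween R T = ∑ _e ∈ G.edgeFinsetBetween R T, 1 := by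
        rw [Finset.sum_const, smul_eq_mul, mul_one, card_edgeFinsetBetween]
    _ ≤ ∑ e ∈ G.edgeFinsetBetween R T, ∑ v, f e v := Finset.sum_le_sum hone
    _ ≤ G.degSumAvoid S T := hswap ▸ Finset.sum_le_univ_sum_of_nonneg fun _ => Nat.zero_le _

end EdgeFinset

theorem isCutEdge_of_not_eqvGen [Finite V] {e : E} {x y : V} (he : G.inc e = s(x, y))
    (hxy : ¬ Relation.EqvGen (G.Step {e}) x y) : G.IsCutEdge e := by
  let π : Quot (G.Step {e}) → Quot (G.Step ∅) :=
    Quot.map id fun _ _ ⟨f, _, hf⟩ => ⟨f, Set.notMem_empty f, hf⟩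
  have hsurj : Function.Surjective π := Quot.ind fun v => ⟨Quot.mk _ v, rfl⟩
  have hninj : ¬ Function.Injective π := fun hinj =>
    hxy (Quot.eq.1 (hinj (Quot.sound ⟨e, Set.notMem_empty e, he⟩)))
  have := Fintype.ofFinite (Quot (G.Step {e}))
  have := Fintype.ofFinite (Quot (G.Step ∅))
  rw [IsCutEdge, numComponents, numComponents, Nat.card_eq_fintype_card, Nat.card_eq_fintype_card]
  exact Fintype.card_lt_of_surjective_not_injective π hsurj hninj

section CutEdges

variable [Fintype E] {R C : Set V} {e : E}

theorem IsCompOf.isCutEdge [Finite V] (hC : G.IsCompOf R C)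
    (he : G.edgeFinsetBetween C Rᶜ = {e}) : G.IsCutEdge e := by
  obtain ⟨c, hc, t, ht, hct⟩ := mem_edgeFinsetBetween.1 (he ▸ Finset.mem_singleton_self e)
  have hclosed : ∀ x y, x ∈ C → G.Step {e} x y → y ∈ C := by
    rintro x y hx ⟨f, hfe, hf⟩
    by_cases hy : y ∈ R
    · exact hC.mem_of_stepIn hx ⟨hC.subset hx, hy, f, hf⟩
    · have : f ∈ G.edgeFinsetBetween C Rᶜ := mem_edgeFinsetBetween.2 ⟨x, hx, y, hy, hf⟩
      exact absurd (Finset.mem_singleton.1 (he ▸ this)) hfe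
  refine G.isCutEdge_of_not_eqvGen hct fun hctE => ht ?_
  exact hC.subset ((hctE.mem_iff_of_closed hclosed).1 hc)

theorem card_le_cutEdgeCount [Finite V] {𝒞 : Finset (Set V)}
    (h𝒞 : ∀ C ∈ 𝒞, G.IsCompOf R C) (hone : ∀ C ∈ 𝒞, G.edgesBetween C Rᶜ = 1) :
    𝒞.card ≤ G.cutEdgeCount := by
  rw [cutEdgeCount, Nat.card_eq_fintype_card, Fintype.card_subtype, Finset.card_eq_sum_ones,
    ← Finset.sum_congr rfl hone, sum_edgesBetween_eq_card_biUnion h𝒞 disjoint_compl_right]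
  refine Finset.card_le_card fun e he => Finset.mem_filter.2 ⟨Finset.mem_univ e, ?_⟩
  obtain ⟨C, hC, heC⟩ := Finset.mem_biUnion.1 he
  obtain ⟨e', he'⟩ := Finset.card_eq_one.1 ((card_edgeFinsetBetween C Rᶜ).trans (hone C hC))
  rw [he', Finset.mem_singleton] at heC
  exact (h𝒞 C hC).isCutEdge (heC ▸ he')

end CutEdges

end Multigraph

open Multigraph in
/-- For a finite multigraph `G` with `p` cut-edges and disjoint `S, T ⊆ V(G)` with
`R = V(G) − S − T`: `3·q(S,T) ≤ 2p + 2‖R,S‖ + d_{G−S}(T)`. -/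
theorem three_oddComps_le
    {V E : Type} [Fintype V] [Fintype E] (G : Multigraph V E)
    (S T : Set V) (hST : Disjoint S T) :
    3 * G.oddComps S T
      ≤ 2 * G.cutEdgeCount + 2 * G.edgesBetween ((S ∪ T)ᶜ) S + G.degSumAvoid S T := by
  set R := (S ∪ T)ᶜ
  have hRS : Disjoint R S := disjoint_compl_left_iff.2 Set.subset_union_left
  have hRT : Disjoint R T := disjoint_compl_left_iff.2 Set.subset_union_right
  set 𝒞 := Finset.univ.filter fun C : Set V => G.IsCompOf R C ∧ Odd (G.edgesBetween C T)
  have h𝒞 : ∀ C ∈ 𝒞, G.IsCompOf R C := fun C hC => (Finset.mem_filter.1 hC).2.1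
  have hsplit : ∀ C ∈ 𝒞, G.edgesBetween C Rᶜ = G.edgesBetween C S + G.edgesBetween C T :=
    fun C hC => by
      rw [compl_compl]
      exact edgesBetween_union_right (hRS.mono_left (h𝒞 C hC).subset) hST
  set 𝒞₁ := 𝒞.filter fun C => G.edgesBetween C Rᶜ = 1
  have hcut : 𝒞₁.card ≤ G.cutEdgeCount := card_le_cutEdgeCount
    (fun C hC => h𝒞 C (Finset.mem_filter.1 hC).1) (fun C hC => (Finset.mem_filter.1 hC).2)
  have hS := sum_edgesBetween_le h𝒞 hRS
  have hT := (sum_edgesBetween_le h𝒞 hRT).trans (edgesBetween_le_degSumAvoid hRS hST)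
  calc 3 * G.oddComps S T = ∑ _C ∈ 𝒞, 3 := by
        rw [oddComps, Nat.card_eq_fintype_card, Fintype.card_subtype, Finset.sum_const,
          smul_eq_mul, mul_comm]
    _ ≤ ∑ C ∈ 𝒞, (2 * (if G.edgesBetween C Rᶜ = 1 then 1 else 0)
          + 2 * G.edgesBetween C S + G.edgesBetween C T) :=
        Finset.sum_le_sum fun C hC =>
          hsplit C hC ▸ three_le_two_mul_ite_add_of_odd (Finset.mem_filter.1 hC).2.2
    _ = 2 * 𝒞₁.card + 2 * ∑ C ∈ 𝒞, G.edgesBetween C S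
          + ∑ C ∈ 𝒞, G.edgesBetween C T := by
        rw [Finset.sum_add_distrib, Finset.sum_add_distrib, ← Finset.mul_sum, ← Finset.mul_sum,
          Finset.card_filter]
    _ ≤ _ := by omega
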